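/- arXiv:2505.17933 — 8 statements merged into one kernel-verified Lean document; each statement's English description precedes it below -/
import Mathlib

section
/- For fixed parameters p ∈ [0,1], δ ∈ [0,1], τ > 0, the map z ↦ p·exp(−δτz) + (1−p)·exp(−τz) + z − 1 has a unique zero in the open interval (0,1) if and only if R_e := τ(pδ + 1 − p) > 1. -/
/-- Quadratic upper bound for `exp (-x)` when `x ≥ 0`. -/
lemma exp_neg_le_quad (x : ℝ) (hx : 0 ≤ x) : Real.exp (-x) ≤ 1 - x + x ^ 2 := by
  have h1 : x + 1 ≤ Real.exp x := Real.add_one_le_exp x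
  have hpos : 0 < Real.exp x := Real.exp_pos x
  rw [Real.exp_neg, inv_le_iff_one_le_mul₀ hpos]
  have hq : 0 ≤ 1 - x + x ^ 2 := by nlinarith [sq_nonneg (2 * x - 1)]
  nlinarith [mul_le_mul_of_nonneg_left h1 hq, pow_nonneg hx 3]

/-- No two distinct roots of the final size equation with `0 < a < b`. -/
lemma no_two_roots (p δ τ : ℝ) (hp0 : 0 ≤ p) (hp1 : p ≤ 1) (hδ0 : 0 ≤ δ)
    (hτ : 0 < τ) (hR : 1 < τ * (p * δ + 1 - p)) (a b : ℝ) (ha : 0 < a) (hab : a < b)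
    (hfa : p * Real.exp (-(δ * τ * a)) + (1 - p) * Real.exp (-(τ * a)) + a - 1 = 0)
    (hfb : p * Real.exp (-(δ * τ * b)) + (1 - p) * Real.exp (-(τ * b)) + b - 1 = 0) :
    False := by
  have hb : 0 < b := ha.trans hab
  set t : ℝ := a / b with htdef
  have ht0 : 0 < t := div_pos ha hb
  have ht1 : t < 1 := (div_lt_one hb).mpr hab
  have htb : t * b = a := div_mul_cancel₀ a hb.ne'
  -- convexity of exp gives: exp(-(c*a)) ≤ (1-t) + t * exp(-(c*b)) for c ≥ 0
  have hconv : ∀ c : ℝ, 0 ≤ c →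
      Real.exp (-(c * a)) ≤ (1 - t) + t * Real.exp (-(c * b)) := by
    intro c hc
    have h := convexOn_exp.2 (Set.mem_univ (0 : ℝ)) (Set.mem_univ (-(c * b)))
      (by linarith : (0:ℝ) ≤ 1 - t) ht0.le (by ring)
    have e1 : (1 - t) • (0:ℝ) + t • (-(c * b)) = -(c * a) := by
      simp only [smul_eq_mul]; rw [← htb]; ring
    have e2 : (1 - t) • Real.exp 0 + t • Real.exp (-(c * b))
        = (1 - t) + t * Real.exp (-(c * b)) := by
      simp [smul_eq_mul]
    rw [e1, e2] at h; exact h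
  have hstrict : ∀ c : ℝ, 0 < c →
      Real.exp (-(c * a)) < (1 - t) + t * Real.exp (-(c * b)) := by
    intro c hc
    have hne : (0 : ℝ) ≠ -(c * b) := by nlinarith
    have h := strictConvexOn_exp.2 (Set.mem_univ (0 : ℝ)) (Set.mem_univ (-(c * b)))
      hne (by linarith : (0:ℝ) < 1 - t) ht0 (by ring)
    have e1 : (1 - t) • (0:ℝ) + t • (-(c * b)) = -(c * a) := by
      simp only [smul_eq_mul]; rw [← htb]; ring
    have e2 : (1 - t) • Real.exp 0 + t • Real.exp (-(c * b))
        = (1 - t) + t * Real.exp (-(c * b)) := by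
      simp [smul_eq_mul]
    rw [e1, e2] at h; exact h
  have hfbt : t * (p * Real.exp (-(δ * τ * b)) + (1 - p) * Real.exp (-(τ * b)) + b - 1)
      = 0 := by rw [hfb]; ring
  rcases lt_or_eq_of_le hp1 with hp1' | hp1'
  · -- p < 1 : use strictness of the second exponential term
    have h1 : p * Real.exp (-(δ * τ * a))
        ≤ p * ((1 - t) + t * Real.exp (-(δ * τ * b))) :=
      mul_le_mul_of_nonneg_left (hconv (δ * τ) (by positivity)) hp0
    have h2 : (1 - p) * Real.exp (-(τ * a))
        < (1 - p) * ((1 - t) + t * Real.exp (-(τ * b))) :=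
      mul_lt_mul_of_pos_left (hstrict τ hτ) (by linarith)
    nlinarith [h1, h2, hfa, hfbt, htb]
  · -- p = 1 : then δ > 0, use strictness of the first exponential term
    subst hp1'
    have hδpos : 0 < δ := by nlinarith
    have h1 : Real.exp (-(δ * τ * a)) < (1 - t) + t * Real.exp (-(δ * τ * b)) :=
      hstrict (δ * τ) (mul_pos hδpos hτ)
    nlinarith [h1, hfa, hfbt, htb]

theorem stmt_0 (p δ τ : ℝ) (hp : p ∈ Set.Icc (0:ℝ) 1) (hδ : δ ∈ Set.Icc (0:ℝ) 1)
    (hτ : 0 < τ) :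
    (∃! z : ℝ, z ∈ Set.Ioo (0:ℝ) 1 ∧
      p * Real.exp (-(δ * τ * z)) + (1 - p) * Real.exp (-(τ * z)) + z - 1 = 0)
    ↔ τ * (p * δ + 1 - p) > 1 := by
  obtain ⟨hp0, hp1⟩ := hp
  obtain ⟨hδ0, hδ1⟩ := hδ
  constructor
  · -- a root in (0,1) forces R_e > 1 (contrapositive)
    rintro ⟨z, ⟨⟨hz0, hz1⟩, hz⟩, -⟩
    by_contra hR
    push_neg at hR
    have hE1 : p * (1 - δ * τ * z) ≤ p * Real.exp (-(δ * τ * z)) := by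
      apply mul_le_mul_of_nonneg_left _ hp0
      have := Real.add_one_le_exp (-(δ * τ * z)); linarith
    have hmul : 0 ≤ z * (1 - τ * (p * δ + 1 - p)) :=
      mul_nonneg hz0.le (by linarith)
    rcases lt_or_eq_of_le hp1 with hp1' | hp1'
    · have hτz : (-(τ * z)) ≠ 0 := by
        have : 0 < τ * z := mul_pos hτ hz0
        intro h; rw [neg_eq_zero] at h; linarith
      have hE2 : (1 - p) * (1 - τ * z) < (1 - p) * Real.exp (-(τ * z)) := by
        apply mul_lt_mul_of_pos_left _ (by linarith)
        have := Real.add_one_lt_exp hτz; linarith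
      nlinarith [hE1, hE2, hmul, hz]
    · subst hp1'
      rcases eq_or_lt_of_le hδ0 with hδ0' | hδ0'
      · rw [← hδ0'] at hz
        norm_num at hz
        linarith
      · have hδτz : (-(δ * τ * z)) ≠ 0 := by
          have : 0 < δ * τ * z := by positivity
          intro h; rw [neg_eq_zero] at h; linarith
        have hE1' : 1 - δ * τ * z < Real.exp (-(δ * τ * z)) := by
          have := Real.add_one_lt_exp hδτz; linarith
        nlinarith [hE1', hmul, hz]
  · intro hR
    set R : ℝ := τ * (p * δ + 1 - p) with hRdef
    set F : ℝ → ℝ := fun z =>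
      p * Real.exp (-(δ * τ * z)) + (1 - p) * Real.exp (-(τ * z)) + z - 1 with hF
    set z₀ : ℝ := min (1/2) ((R - 1) / (2 * τ ^ 2)) with hz₀def
    have hz₀pos : 0 < z₀ := lt_min (by norm_num)
      (div_pos (by linarith) (by positivity))
    have hz₀lt1 : z₀ < 1 := lt_of_le_of_lt (min_le_left _ _) (by norm_num)
    have hz₀τ : z₀ * τ ^ 2 ≤ (R - 1) / 2 := by
      have h := min_le_right (1/2) ((R - 1) / (2 * τ ^ 2))
      have hτ2 : 0 < τ ^ 2 := by positivity
      calc z₀ * τ ^ 2 ≤ ((R - 1) / (2 * τ ^ 2)) * τ ^ 2 := by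
            exact mul_le_mul_of_nonneg_right h hτ2.le
        _ = (R - 1) / 2 := by field_simp
    -- F z₀ < 0
    have hFz₀ : F z₀ < 0 := by
      have hb1 : Real.exp (-(δ * τ * z₀)) ≤ 1 - δ * τ * z₀ + (δ * τ * z₀) ^ 2 :=
        exp_neg_le_quad _ (by positivity)
      have hb2 : Real.exp (-(τ * z₀)) ≤ 1 - τ * z₀ + (τ * z₀) ^ 2 :=
        exp_neg_le_quad _ (by positivity)
      have h1 : p * Real.exp (-(δ * τ * z₀)) ≤ p * (1 - δ * τ * z₀ + (δ * τ * z₀) ^ 2) :=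
        mul_le_mul_of_nonneg_left hb1 hp0
      have h2 : (1 - p) * Real.exp (-(τ * z₀)) ≤ (1 - p) * (1 - τ * z₀ + (τ * z₀) ^ 2) :=
        mul_le_mul_of_nonneg_left hb2 (by linarith)
      have hδsq : p * δ ^ 2 + (1 - p) ≤ 1 := by
        have : 0 ≤ p * (1 - δ ^ 2) := mul_nonneg hp0 (by nlinarith)
        nlinarith
      have key : p * (1 - δ * τ * z₀ + (δ * τ * z₀) ^ 2)
          + (1 - p) * (1 - τ * z₀ + (τ * z₀) ^ 2) + z₀ - 1
          = z₀ * (1 - R) + z₀ ^ 2 * τ ^ 2 * (p * δ ^ 2 + (1 - p)) := by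
        rw [hRdef]; ring
      have hlast : z₀ ^ 2 * τ ^ 2 * (p * δ ^ 2 + (1 - p)) ≤ z₀ * ((R - 1) / 2) := by
        calc z₀ ^ 2 * τ ^ 2 * (p * δ ^ 2 + (1 - p)) ≤ z₀ ^ 2 * τ ^ 2 * 1 := by
              apply mul_le_mul_of_nonneg_left hδsq (by positivity)
          _ = z₀ * (z₀ * τ ^ 2) := by ring
          _ ≤ z₀ * ((R - 1) / 2) := mul_le_mul_of_nonneg_left hz₀τ hz₀pos.le
      have hneg : z₀ * (1 - R) + z₀ * ((R - 1) / 2) < 0 := by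
        have : z₀ * (1 - R) + z₀ * ((R - 1) / 2) = -(z₀ * ((R - 1) / 2)) := by ring
        rw [this]
        have : 0 < z₀ * ((R - 1) / 2) := by
          apply mul_pos hz₀pos; linarith
        linarith
      have : F z₀ ≤ z₀ * (1 - R) + z₀ ^ 2 * τ ^ 2 * (p * δ ^ 2 + (1 - p)) := by
        rw [hF]; dsimp only; linarith [h1, h2, key]
      linarith
    -- F 1 > 0
    have hF1 : 0 < F 1 := by
      rw [hF]; dsimp only
      rcases lt_or_eq_of_le hp0 with hp0' | hp0'
      · have := Real.exp_pos (-(δ * τ * 1))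
        have := Real.exp_pos (-(τ * 1))
        nlinarith
      · rw [← hp0']
        norm_num
        positivity
    -- IVT
    have hcont : ContinuousOn F (Set.Icc z₀ 1) := by
      apply Continuous.continuousOn; rw [hF]; fun_prop
    have hsub := intermediate_value_Ioo hz₀lt1.le hcont
    have h0mem : (0 : ℝ) ∈ Set.Ioo (F z₀) (F 1) := ⟨hFz₀, hF1⟩
    obtain ⟨c, hc, hFc⟩ := hsub h0mem
    have hc0 : 0 < c := hz₀pos.trans hc.1
    have hc1 : c < 1 := hc.2
    refine ⟨c, ⟨⟨hc0, hc1⟩, hFc⟩, ?_⟩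
    rintro y ⟨⟨hy0, hy1⟩, hy⟩
    rcases lt_trichotomy y c with h | h | h
    · exact absurd (no_two_roots p δ τ hp0 hp1 hδ0 hτ hR y c hy0 h hy hFc) id
    · exact h
    · exact absurd (no_two_roots p δ τ hp0 hp1 hδ0 hτ hR c y hc0 h hFc hy) id
end

section
/- If R_e := τ(pδ + 1 − p) ≤ 1 with p ∈ (0,1), δ ∈ (0,1), τ > 0, then z = 0 is the only solution in [0,1) of the final-size equation 1 − z = p·exp(−δτz) + (1−p)·exp(−τz). -/
/-! Since `exp (-x) ≥ 1 - x`, with equality only at `x = 0`, the right-hand side of the final-size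
equation is at least `1 - τ (p δ + 1 - p) z ≥ 1 - z` when `R_e ≤ 1`. A solution therefore forces
equality in the tangent-line bound on the term of weight `1 - p > 0`, i.e. `τ z = 0`, and then the
equation reads `1 - z = 1`. -/

open Real

theorem eq_zero_of_final_size_eq {p δ τ z : ℝ} (hp₀ : 0 ≤ p) (hp₁ : p < 1) (hz : 0 ≤ z)
    (hRe : τ * (p * δ + 1 - p) ≤ 1)
    (h : 1 - z = p * exp (-(δ * τ * z)) + (1 - p) * exp (-(τ * z))) : z = 0 := by
  have hτz : τ * z = 0 := by
    by_contra hne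
    have hδτz := mul_le_mul_of_nonneg_left (add_one_le_exp (-(δ * τ * z))) hp₀
    have hτz := mul_lt_mul_of_pos_left (add_one_lt_exp (neg_ne_zero.mpr hne)) (sub_pos.mpr hp₁)
    have hRez := mul_le_mul_of_nonneg_right hRe hz
    linarith
  have hδτz : δ * τ * z = 0 := by rw [mul_assoc, hτz, mul_zero]
  simpa [hδτz, hτz] using h

theorem stmt_1_general (p δ τ : ℝ) (hp : p ∈ Set.Ioo (0:ℝ) 1) (hRe : τ * (p * δ + 1 - p) ≤ 1) :
    ∀ z ∈ Set.Ico (0:ℝ) 1,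
      (1 - z = p * Real.exp (-(δ * τ * z)) + (1 - p) * Real.exp (-(τ * z))) ↔ z = 0 := by
  rintro z ⟨hz, -⟩
  refine ⟨eq_zero_of_final_size_eq hp.1.le hp.2 hz hRe, ?_⟩
  rintro rfl
  simp

theorem stmt_1 (p δ τ : ℝ) (hp : p ∈ Set.Ioo (0:ℝ) 1) (hδ : δ ∈ Set.Ioo (0:ℝ) 1)
    (hτ : 0 < τ) (hRe : τ * (p * δ + 1 - p) ≤ 1) :
    ∀ z ∈ Set.Ico (0:ℝ) 1,
      (1 - z = p * Real.exp (-(δ * τ * z)) + (1 - p) * Real.exp (-(τ * z))) ↔ z = 0 :=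
  stmt_1_general p δ τ hp hRe
end

section
/- Let p ∈ (0,1), z ∈ (0,1), R_e > 1, and suppose z satisfies the final-size equation (i.e., G(δ, z, R_e) = 0 for some δ). Then at that solution, ∂G/∂z = 1 − (R_e/(pδ+1−p))·(pδ·exp(−δR_e z/(pδ+1−p)) + (1−p)·exp(−R_e z/(pδ+1−p))) > 0. -/
theorem stmt_5 (p z Re δ : ℝ) (hp : p ∈ Set.Ioo (0:ℝ) 1) (hz : z ∈ Set.Ioo (0:ℝ) 1)
    (hRe : 1 < Re) (hδ : δ ∈ Set.Ioo (0:ℝ) 1)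
    (hsol : p * Real.exp (-(δ * Re * z / (p * δ + 1 - p)))
      + (1 - p) * Real.exp (-(Re * z / (p * δ + 1 - p))) + z - 1 = 0) :
    HasDerivAt
      (fun y : ℝ => p * Real.exp (-(δ * Re * y / (p * δ + 1 - p)))
        + (1 - p) * Real.exp (-(Re * y / (p * δ + 1 - p))) + y - 1)
      (1 - Re / (p * δ + 1 - p)
        * (p * δ * Real.exp (-(δ * Re * z / (p * δ + 1 - p)))
           + (1 - p) * Real.exp (-(Re * z / (p * δ + 1 - p))))) z
    ∧
    0 < 1 - Re / (p * δ + 1 - p)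
        * (p * δ * Real.exp (-(δ * Re * z / (p * δ + 1 - p)))
           + (1 - p) * Real.exp (-(Re * z / (p * δ + 1 - p)))) := by
  obtain ⟨hp0, hp1⟩ := hp
  obtain ⟨hz0, hz1⟩ := hz
  obtain ⟨hδ0, hδ1⟩ := hδ
  have hc : 0 < p * δ + 1 - p := by nlinarith
  set c := p * δ + 1 - p with hcdef
  have key : ∀ k : ℝ, HasDerivAt (fun y : ℝ => Real.exp (-(k * y / c)))
      (Real.exp (-(k * z / c)) * (-(k / c))) z := by
    intro k
    have h1 : HasDerivAt (fun y : ℝ => -(k * y / c)) (-(k / c)) z := by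
      have he : (fun y : ℝ => -(k * y / c)) = fun y : ℝ => (-(k / c)) * y := by
        funext y; ring
      rw [he]
      simpa using (hasDerivAt_id z).const_mul (-(k / c))
    simpa using h1.exp
  constructor
  · have h := ((((key (δ * Re)).const_mul p).add ((key Re).const_mul (1 - p))).add
      (hasDerivAt_id' z)).sub_const 1
    refine h.congr_deriv ?_
    ring
  · -- positivity
    set A := δ * Re * z / c with hA
    set B := Re * z / c with hB
    have hApos : 0 < A := by
      have : 0 < δ * Re * z := by positivity
      exact div_pos this hc
    have hBpos : 0 < B := by
      have : 0 < Re * z := by positivity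
      exact div_pos this hc
    have eApos := Real.exp_pos (-A)
    have eBpos := Real.exp_pos (-B)
    have ineq : ∀ u : ℝ, 0 < u → u * Real.exp (-u) < 1 - Real.exp (-u) := by
      intro u hu
      have h1 := Real.add_one_lt_exp (ne_of_gt hu)
      have h2 : (u + 1) * Real.exp (-u) < Real.exp u * Real.exp (-u) :=
        mul_lt_mul_of_pos_right h1 (Real.exp_pos _)
      have h3 : Real.exp u * Real.exp (-u) = 1 := by
        rw [← Real.exp_add]; simp
      nlinarith [h2, h3]
    have ineqA := ineq A hApos
    have ineqB := ineq B hBpos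
    have hsol' : p * Real.exp (-A) + (1 - p) * Real.exp (-B) = 1 - z := by linarith [hsol]
    set s := Re / c * (p * δ * Real.exp (-A) + (1 - p) * Real.exp (-B)) with hs
    have hsz : s * z = p * (A * Real.exp (-A)) + (1 - p) * (B * Real.exp (-B)) := by
      rw [hs, hA, hB]; field_simp
    have h1 : p * (A * Real.exp (-A)) < p * (1 - Real.exp (-A)) :=
      mul_lt_mul_of_pos_left ineqA hp0
    have h2 : (1 - p) * (B * Real.exp (-B)) < (1 - p) * (1 - Real.exp (-B)) :=
      mul_lt_mul_of_pos_left ineqB (by linarith)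
    have hlt : s * z < z := by nlinarith [h1, h2, hsol']
    nlinarith [hlt, hz0]
end

section
/- For p ∈ (0,1), z ∈ (0,1), R_e > 0 with z < 1 − p, the condition G(0, z, R_e) > 0 > G(1, z, R_e) is equivalent to −ln(1−z)/z < R_e < −((1−p)/z)·ln(1 − z/(1−p)). -/
/-!
Both inequalities compare `exp (-(Re * x))` with `1 - x`: for `G(1, z, Re)` with `x = z`, and for
`G(0, z, Re)`, after division by `1 - p`, with `x = z / (1 - p)`, which lies in `(0, 1)` because
`z < 1 - p`. Taking logarithms, `exp (-(Re * x)) ≶ 1 - x` is `Re ≷ -log (1 - x) / x`.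
-/

open Real

section ExpVersusOneSub

variable {x R : ℝ}

lemma exp_neg_mul_lt_one_sub_iff (hx0 : 0 < x) (hx1 : x < 1) :
    exp (-(R * x)) < 1 - x ↔ -log (1 - x) / x < R := by
  rw [div_lt_iff₀ hx0, neg_lt, lt_log_iff_exp_lt (by linarith)]

lemma one_sub_lt_exp_neg_mul_iff (hx0 : 0 < x) (hx1 : x < 1) :
    1 - x < exp (-(R * x)) ↔ R < -log (1 - x) / x := by
  rw [lt_div_iff₀ hx0, lt_neg, log_lt_iff_lt_exp (by linarith)]

end ExpVersusOneSub

theorem stmt_7_general (p z Re : ℝ) (hz : z ∈ Set.Ioo (0:ℝ) 1)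
    (hzp : z < 1 - p) :
    (p + (1 - p) * Real.exp (-(Re * z / (1 - p))) + z - 1 > 0
      ∧ Real.exp (-(Re * z)) + z - 1 < 0)
    ↔ (-Real.log (1 - z) / z < Re
        ∧ Re < -((1 - p) / z) * Real.log (1 - z / (1 - p))) := by
  obtain ⟨hz0, hz1⟩ := hz
  have h1p : 0 < 1 - p := by linarith
  set w := z / (1 - p) with hw
  have hw0 : 0 < w := div_pos hz0 h1p
  have hw1 : w < 1 := (div_lt_one h1p).2 hzp
  have hG0 : p + (1 - p) * exp (-(Re * z / (1 - p))) + z - 1 > 0 ↔ 1 - w < exp (-(Re * w)) := by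
    rw [← mul_div_assoc, gt_iff_lt, ← mul_lt_mul_iff_of_pos_left h1p, hw]
    constructor <;> intro h <;> field_simp at h ⊢ <;> linarith
  have hbound : -((1 - p) / z) * log (1 - w) = -log (1 - w) / w := by
    rw [hw]; field_simp
  have hG1 : exp (-(Re * z)) + z - 1 < 0 ↔ exp (-(Re * z)) < 1 - z := by
    constructor <;> intro h <;> linarith
  rw [hG0, hG1, hbound, one_sub_lt_exp_neg_mul_iff hw0 hw1,
    exp_neg_mul_lt_one_sub_iff hz0 hz1, and_comm]

theorem stmt_7 (p z Re : ℝ) (hp : p ∈ Set.Ioo (0:ℝ) 1) (hz : z ∈ Set.Ioo (0:ℝ) 1)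
    (hRe : 0 < Re) (hzp : z < 1 - p) :
    (p + (1 - p) * Real.exp (-(Re * z / (1 - p))) + z - 1 > 0
      ∧ Real.exp (-(Re * z)) + z - 1 < 0)
    ↔ (-Real.log (1 - z) / z < Re
        ∧ Re < -((1 - p) / z) * Real.log (1 - z / (1 - p))) :=
  stmt_7_general p z Re hz hzp
end

section
/- Any solution z ∈ (0,1) of the final-size equation 1 − z = p·exp(−δτz) + (1−p)·exp(−τz), with p ∈ (0,1), δ ∈ (0,1), τ > 0, satisfies R_e > −ln(1−z)/z, where R_e = τ(pδ + 1 − p). Equivalently, the pair (z, R_e) always lies strictly above the curve R_e = −ln(1−z)/z. -/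
/-!
Writing the final-size equation as `1 - z = p e^{-δτz} + (1-p) e^{-τz}`, strict convexity of
`exp` (the exponents differ because `δ ≠ 1`) gives `e^{-R_e z} < 1 - z`, and taking logarithms
yields `-log (1 - z) < R_e z`.
-/

open Real

lemma exp_convexComb_lt {p a b : ℝ} (hp : p ∈ Set.Ioo (0:ℝ) 1) (hab : a ≠ b) :
    exp (p * a + (1 - p) * b) < p * exp a + (1 - p) * exp b := by
  simpa only [smul_eq_mul] using strictConvexOn_exp.2 (Set.mem_univ a) (Set.mem_univ b) hab
    hp.1 (sub_pos.mpr hp.2) (by ring)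

lemma neg_log_one_sub_div_lt_of_exp_lt {R z : ℝ} (hz : 0 < z) (h : exp (-(R * z)) < 1 - z) :
    -log (1 - z) / z < R := by
  have hlog : -(R * z) < log (1 - z) := by
    simpa only [log_exp] using log_lt_log (exp_pos _) h
  rw [div_lt_iff₀ hz]
  linarith

theorem stmt_9 (p δ τ z : ℝ) (hp : p ∈ Set.Ioo (0:ℝ) 1) (hδ : δ ∈ Set.Ioo (0:ℝ) 1)
    (hτ : 0 < τ) (hz : z ∈ Set.Ioo (0:ℝ) 1)
    (hsol : 1 - z = p * Real.exp (-(δ * τ * z)) + (1 - p) * Real.exp (-(τ * z))) :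
    -Real.log (1 - z) / z < τ * (p * δ + 1 - p) := by
  have hexponents : -(δ * τ * z) ≠ -(τ * z) := by
    have : δ * τ * z < τ * z := by nlinarith [mul_pos hτ hz.1, hδ.2]
    exact neg_injective.ne this.ne
  apply neg_log_one_sub_div_lt_of_exp_lt hz.1
  calc exp (-(τ * (p * δ + 1 - p) * z))
      = exp (p * -(δ * τ * z) + (1 - p) * -(τ * z)) := by ring_nf
    _ < 1 - z := hsol ▸ exp_convexComb_lt hp hexponents
end

section
/- Fix p ∈ (0,1) and R_e > 1, and for δ ∈ (0,1) let z(δ) ∈ (0,1) be the unique solution of G(δ, z, R_e) = 0 where G(δ,z,R_e) = p·e^{−δR_e z/(pδ+1−p)} + (1−p)·e^{−R_e z/(pδ+1−p)} + z − 1. Then z(δ) is strictly increasing in δ. -/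
/-!
Write `G(δ, z) = p e^{-a z} + (1 - p) e^{-b z} + z - 1` with `a = δ Re / s`, `b = Re / s` and
`s = p δ + 1 - p`. The weighted mean `p a + (1 - p) b = Re` does not depend on `δ`, while raising `δ`
pulls `a` and `b` towards each other; by strict convexity of `exp` this strictly lowers `G(δ, z)` for
every `z > 0`. On the other hand `z ↦ G(δ, z)` is convex and vanishes at `0`, so it is negative
exactly between `0` and its positive root. Hence if `δ < δ'` then `G(δ', z(δ)) < G(δ, z(δ)) = 0`, and
`z(δ)` lies below the positive root `z(δ')`.
-/

open Real Set

theorem StrictConvexOn.weighted_pair_lt_of_contract {s : Set ℝ} {g : ℝ → ℝ}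
    (hg : StrictConvexOn ℝ s g) {w a b a' b' : ℝ} (has : a ∈ s) (hbs : b ∈ s)
    (hw0 : 0 < w) (hw1 : w < 1) (ha : a < a') (hab : a' ≤ b') (hb : b' < b)
    (hmean : w * a' + (1 - w) * b' = w * a + (1 - w) * b) :
    w * g a' + (1 - w) * g b' < w * g a + (1 - w) * g b := by
  have hga' := hg.secant_strict_mono_aux1 has hbs ha (hab.trans_lt hb)
  have hgb' := hg.secant_strict_mono_aux1 has hbs (ha.trans_le hab) hb
  have hsum : (b - a) * (w * g a' + (1 - w) * g b')
      < (b - a) * (w * g a + (1 - w) * g b) := by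
    linear_combination w * hga' + (1 - w) * hgb' + (g b - g a) * hmean
  exact lt_of_mul_lt_mul_left hsum (by linarith)

theorem ConvexOn.lt_of_apply_neg {f : ℝ → ℝ} (hf : ConvexOn ℝ (Ici 0) f) (hf0 : f 0 = 0)
    {w z : ℝ} (hw : 0 < w) (hfw : f w = 0) (hfz : f z < 0) : z < w := by
  by_contra! hwz
  have hzw : w < z := lt_of_le_of_ne hwz (by rintro rfl; linarith)
  have hsec := hf.secant_mono (mem_Ici.2 le_rfl) hw.le (hw.trans hzw).le hw.ne'
    (hw.trans hzw).ne' hzw.le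
  simp only [hf0, hfw, sub_zero, zero_div] at hsec
  linarith [div_neg_of_neg_of_pos hfz (hw.trans hzw)]

theorem convexOn_exp_mul (c : ℝ) : ConvexOn ℝ univ fun x => exp (c * x) :=
  convexOn_exp.comp_linearMap (LinearMap.mulLeft ℝ c)

/-- The paper's `G(δ, z, R_e)`. -/
noncomputable def finalSizeResidual (p Re δ z : ℝ) : ℝ :=
  p * exp (-(δ * Re * z / (p * δ + 1 - p))) + (1 - p) * exp (-(Re * z / (p * δ + 1 - p))) + z - 1

theorem finalSizeResidual_zero (p Re δ : ℝ) : finalSizeResidual p Re δ 0 = 0 := by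
  simp [finalSizeResidual]

theorem convexOn_finalSizeResidual {p : ℝ} (hp0 : 0 ≤ p) (hp1 : p ≤ 1) (Re δ : ℝ) :
    ConvexOn ℝ univ (finalSizeResidual p Re δ) := by
  have hconv := (((convexOn_exp_mul (-(δ * Re / (p * δ + 1 - p)))).smul hp0).add
    ((convexOn_exp_mul (-(Re / (p * δ + 1 - p)))).smul (sub_nonneg.2 hp1))).add
    ((convexOn_id convex_univ).add_const (-1))
  refine hconv.congr fun z _ => ?_
  simp only [finalSizeResidual, Pi.add_apply, id, smul_eq_mul, neg_mul, div_mul_eq_mul_div]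
  ring

theorem finalSizeResidual_strictAntiOn {p Re z : ℝ} (hp : p ∈ Ioo 0 1) (hRe : 0 < Re)
    (hz : 0 < z) : StrictAntiOn (fun δ => finalSizeResidual p Re δ z) (Icc 0 1) := by
  obtain ⟨hp0, hp1⟩ := hp
  rintro x ⟨hx0, -⟩ y ⟨-, hy1⟩ hxy
  have hc : 0 < Re * z := mul_pos hRe hz
  have hsx : 0 < p * x + 1 - p := by nlinarith
  have hsy : 0 < p * y + 1 - p := by nlinarith
  have hcontract := strictConvexOn_exp.weighted_pair_lt_of_contract (mem_univ _) (mem_univ _)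
    (sub_pos.2 hp1) (sub_lt_self 1 hp0)
    (a := -(Re * z / (p * x + 1 - p))) (b := -(x * Re * z / (p * x + 1 - p)))
    (a' := -(Re * z / (p * y + 1 - p))) (b' := -(y * Re * z / (p * y + 1 - p)))
    (by rw [neg_lt_neg_iff]; exact div_lt_div_of_pos_left hc hsx (by nlinarith))
    (by rw [neg_le_neg_iff]; exact div_le_div_of_nonneg_right (by nlinarith) hsy.le)
    (by rw [neg_lt_neg_iff, div_lt_div_iff₀ hsx hsy]; nlinarith [mul_pos hc (sub_pos.2 hp1)])
    (by field_simp; ring)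
  simp only [finalSizeResidual, sub_sub_cancel] at hcontract ⊢
  linarith

theorem stmt_12 (p Re : ℝ) (hp : p ∈ Set.Ioo (0:ℝ) 1) (hRe : 1 < Re) (Z : ℝ → ℝ)
    (hZ : ∀ δ ∈ Set.Ioo (0:ℝ) 1, Z δ ∈ Set.Ioo (0:ℝ) 1 ∧
      p * Real.exp (-(δ * Re * Z δ / (p * δ + 1 - p)))
        + (1 - p) * Real.exp (-(Re * Z δ / (p * δ + 1 - p))) + Z δ - 1 = 0) :
    StrictMonoOn Z (Set.Ioo (0:ℝ) 1) := by
  intro x hx y hy hxy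
  obtain ⟨⟨hZx, -⟩, hGx⟩ := hZ x hx
  obtain ⟨⟨hZy, -⟩, hGy⟩ := hZ y hy
  have hlower : finalSizeResidual p Re y (Z x) < 0 :=
    calc finalSizeResidual p Re y (Z x) < finalSizeResidual p Re x (Z x) :=
          finalSizeResidual_strictAntiOn hp (by linarith) hZx (Ioo_subset_Icc_self hx)
            (Ioo_subset_Icc_self hy) hxy
      _ = 0 := hGx
  exact ((convexOn_finalSizeResidual hp.1.le hp.2.le Re y).subset (subset_univ _)
    (convex_Ici 0)).lt_of_apply_neg (finalSizeResidual_zero p Re y) hZy hGy hlower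
end

section
/- Consider the final-size equation with mixture weights: for weights p_j ≥ 0 summing to 1 and susceptibilities s_j ∈ [0,1] (j = 1,…,r) with s_r = 1, and τ > 0, if R_e := τ·Σ_j p_j s_j ≤ 1 then z = 0 is the unique solution in [0,1) of 1 − z = Σ_j p_j·exp(−s_j τ z); if R_e > 1 there is exactly one additional solution z ∈ (0,1). -/
open Real Set Finset

private lemma exp_neg_quad {x : ℝ} (hx : 0 ≤ x) : Real.exp (-x) ≤ 1 - x + x^2/2 := by
  have hd : ∀ y : ℝ, HasDerivAt (fun y : ℝ => Real.exp (-y) - (1 - y + y^2/2))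
      (-Real.exp (-y) - (-1 + y)) y := by
    intro y
    have h1 : HasDerivAt (fun y : ℝ => Real.exp (-y)) (-Real.exp (-y)) y := by
      simpa [Function.comp_def] using (Real.hasDerivAt_exp (-y)).comp y (hasDerivAt_neg y)
    have h2 : HasDerivAt (fun y : ℝ => 1 - y + y^2/2) (-1 + y) y := by
      have hp2 := (hasDerivAt_pow 2 y).div_const 2
      have := ((hasDerivAt_const y (1:ℝ)).sub (hasDerivAt_id y)).add hp2
      exact this.congr_deriv (by norm_num)
    exact h1.sub h2
  have h : AntitoneOn (fun y : ℝ => Real.exp (-y) - (1 - y + y^2/2)) (Set.Ici 0) := by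
    apply antitoneOn_of_deriv_nonpos (convex_Ici 0)
    · fun_prop
    · intro y _
      exact (hd y).differentiableAt.differentiableWithinAt
    · intro y _
      rw [(hd y).deriv]
      have := Real.add_one_le_exp (-y)
      nlinarith [Real.exp_pos (-y)]
  have := h Set.self_mem_Ici hx hx
  simp only [neg_zero, Real.exp_zero] at this
  linarith

theorem stmt_16 (r : ℕ) (p s : Fin (r + 1) → ℝ) (τ : ℝ)
    (hp : ∀ j, 0 ≤ p j) (hpsum : ∑ j, p j = 1)
    (hs : ∀ j, s j ∈ Set.Icc (0:ℝ) 1) (hsr : s (Fin.last r) = 1) (hτ : 0 < τ) :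
    (τ * ∑ j, p j * s j ≤ 1 →
      ∀ z ∈ Set.Ico (0:ℝ) 1,
        (1 - z = ∑ j, p j * Real.exp (-(s j * τ * z))) ↔ z = 0)
    ∧
    (τ * ∑ j, p j * s j > 1 →
      ∃! z : ℝ, z ∈ Set.Ioo (0:ℝ) 1 ∧
        1 - z = ∑ j, p j * Real.exp (-(s j * τ * z))) := by
  set F : ℝ → ℝ := fun z => ∑ j, p j * Real.exp (-(s j * τ * z)) with hF
  have hs0 : ∀ j, 0 ≤ s j := fun j => (hs j).1
  have hs1 : ∀ j, s j ≤ 1 := fun j => (hs j).2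
  have hps : ∀ j, 0 ≤ p j * s j := fun j => mul_nonneg (hp j) (hs0 j)
  have hF0 : F 0 = 1 := by simp [hF, hpsum]
  have hexpand : ∀ z : ℝ, ∑ j, p j * (1 - s j * τ * z)
      = 1 - (τ * ∑ j, p j * s j) * z := by
    intro z
    calc ∑ j, p j * (1 - s j * τ * z)
        = ∑ j, (p j - (p j * s j) * (τ * z)) := by
          apply Finset.sum_congr rfl; intros; ring
      _ = (∑ j, p j) - (∑ j, p j * s j) * (τ * z) := by
          rw [Finset.sum_sub_distrib, ← Finset.sum_mul]
      _ = 1 - (τ * ∑ j, p j * s j) * z := by rw [hpsum]; ring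
  constructor
  · -- subcritical case
    intro hRe z hz
    constructor
    · intro heq
      have heqF : 1 - z = F z := heq
      by_contra hzne
      have hzpos : 0 < z := lt_of_le_of_ne hz.1 (Ne.symm hzne)
      have hle : ∀ j ∈ Finset.univ (α := Fin (r+1)),
          p j * (1 - s j * τ * z) ≤ p j * Real.exp (-(s j * τ * z)) := by
        intro j _
        have := Real.add_one_le_exp (-(s j * τ * z))
        have h1 : 1 - s j * τ * z ≤ Real.exp (-(s j * τ * z)) := by linarith
        exact mul_le_mul_of_nonneg_left h1 (hp j)
      have hsum_le : ∑ j, p j * (1 - s j * τ * z) ≤ F z := Finset.sum_le_sum hle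
      rw [hexpand z] at hsum_le
      rcases lt_or_eq_of_le hRe with hRlt | hReq
      · nlinarith [hsum_le, heqF]
      · -- Re = 1
        have hsumpos : 0 < ∑ j, p j * s j := by nlinarith [hReq, hτ]
        obtain ⟨j0, -, hj0⟩ := Finset.exists_lt_of_sum_lt
          (by simpa using hsumpos : ∑ j : Fin (r+1), (0:ℝ) < ∑ j, p j * s j)
        have hpj0 : 0 < p j0 := by
          rcases (hp j0).lt_or_eq with h | h
          · exact h
          · exfalso; rw [← h] at hj0; simp at hj0
        have hsj0 : 0 < s j0 := by nlinarith [hp j0]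
        have hstrict : ∑ j, p j * (1 - s j * τ * z) < F z := by
          apply Finset.sum_lt_sum hle
          refine ⟨j0, Finset.mem_univ _, ?_⟩
          have hne : -(s j0 * τ * z) ≠ 0 := by
            have : 0 < s j0 * τ * z := mul_pos (mul_pos hsj0 hτ) hzpos
            linarith
          have := Real.add_one_lt_exp hne
          have h1 : 1 - s j0 * τ * z < Real.exp (-(s j0 * τ * z)) := by linarith
          exact mul_lt_mul_of_pos_left h1 hpj0
        rw [hexpand z, hReq] at hstrict
        nlinarith [hstrict, heqF]
    · intro hz0
      subst hz0
      norm_num [hpsum]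
  · -- supercritical case
    intro hRe
    have hsumpos : 0 < ∑ j, p j * s j := by nlinarith
    obtain ⟨j0, -, hj0⟩ := Finset.exists_lt_of_sum_lt
      (by simpa using hsumpos : ∑ j : Fin (r+1), (0:ℝ) < ∑ j, p j * s j)
    have hpj0 : 0 < p j0 := by
      rcases (hp j0).lt_or_eq with h | h
      · exact h
      · exfalso; rw [← h] at hj0; simp at hj0
    have hsj0 : 0 < s j0 := by nlinarith [hp j0]
    set Re := τ * ∑ j, p j * s j with hRedef
    set φ : ℝ → ℝ := fun z => F z + z - 1 with hφ
    have hφcont : Continuous φ := by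
      apply Continuous.sub
      · apply Continuous.add
        · exact continuous_finset_sum _ (fun j _ => by fun_prop)
        · exact continuous_id
      · exact continuous_const
    have hφ1 : 0 < φ 1 := by
      have : 0 < F 1 := by
        apply Finset.sum_pos' (fun j _ => mul_nonneg (hp j) (Real.exp_pos _).le)
        exact ⟨j0, Finset.mem_univ _, mul_pos hpj0 (Real.exp_pos _)⟩
      simp only [hφ]
      linarith
    set z0 : ℝ := min (1/2) ((Re - 1) / (τ^2)) with hz0def
    have hz0pos : 0 < z0 := by
      apply lt_min (by norm_num)
      apply div_pos (by linarith) (by positivity)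
    have hz0lt1 : z0 < 1 := lt_of_le_of_lt (min_le_left _ _) (by norm_num)
    have hφz0 : φ z0 < 0 := by
      have hub : ∀ j ∈ Finset.univ (α := Fin (r+1)),
          p j * Real.exp (-(s j * τ * z0))
          ≤ p j * (1 - s j * τ * z0 + (s j * τ * z0)^2/2) := by
        intro j _
        refine mul_le_mul_of_nonneg_left ?_ (hp j)
        exact exp_neg_quad (mul_nonneg (mul_nonneg (hs0 j) hτ.le) hz0pos.le)
      have h1 : F z0 ≤ ∑ j, p j * (1 - s j * τ * z0 + (s j * τ * z0)^2/2) :=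
        Finset.sum_le_sum hub
      have h2 : ∑ j, p j * (1 - s j * τ * z0 + (s j * τ * z0)^2/2)
          ≤ 1 - Re * z0 + z0^2 * τ^2 / 2 := by
        have hterm : ∀ j ∈ Finset.univ (α := Fin (r+1)),
            p j * (1 - s j * τ * z0 + (s j * τ * z0)^2/2)
            ≤ p j * (1 - s j * τ * z0) + p j * (z0^2 * τ^2 / 2) := by
          intro j _
          have h0 : 0 ≤ s j * τ * z0 := mul_nonneg (mul_nonneg (hs0 j) hτ.le) hz0pos.le
          have h1' : s j * τ * z0 ≤ τ * z0 := by
            nlinarith [mul_nonneg (sub_nonneg.2 (hs1 j)) (mul_nonneg hτ.le hz0pos.le)]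
          have hsq : (s j * τ * z0)^2 ≤ z0^2 * τ^2 := by nlinarith
          nlinarith [hp j]
        calc ∑ j, p j * (1 - s j * τ * z0 + (s j * τ * z0)^2/2)
            ≤ ∑ j, (p j * (1 - s j * τ * z0) + p j * (z0^2 * τ^2 / 2)) :=
              Finset.sum_le_sum hterm
          _ = 1 - Re * z0 + z0^2 * τ^2 / 2 := by
              rw [Finset.sum_add_distrib, ← Finset.sum_mul, hpsum, hexpand z0]
              ring
      have h3 : z0 * τ^2 ≤ Re - 1 := by
        have hm := min_le_right (1/2 : ℝ) ((Re - 1) / (τ^2))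
        calc z0 * τ^2 ≤ ((Re - 1) / (τ^2)) * τ^2 :=
              mul_le_mul_of_nonneg_right hm (by positivity)
          _ = Re - 1 := by field_simp
      have hFz0 : F z0 ≤ 1 - Re * z0 + z0^2 * τ^2/2 := le_trans h1 h2
      simp only [hφ]
      nlinarith [hz0pos]
    have h0mem : (0:ℝ) ∈ Set.Ioo (φ z0) (φ 1) := ⟨hφz0, hφ1⟩
    obtain ⟨c, hc, hφc⟩ := intermediate_value_Ioo hz0lt1.le hφcont.continuousOn h0mem
    have hcmem : c ∈ Set.Ioo (0:ℝ) 1 := ⟨lt_trans hz0pos hc.1, hc.2⟩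
    have hceq : 1 - c = F c := by
      simp only [hφ] at hφc; linarith
    have uniq : ∀ z1 z2 : ℝ, z1 ∈ Set.Ioo (0:ℝ) 1 → z2 ∈ Set.Ioo (0:ℝ) 1 →
        z1 < z2 → 1 - z1 = F z1 → 1 - z2 = F z2 → False := by
      intro z1 z2 hz1 hz2 hlt he1 he2
      have hz2pos : 0 < z2 := lt_trans hz1.1 hlt
      set t := z1 / z2 with htdef
      have htpos : 0 < t := div_pos hz1.1 hz2pos
      have htlt1 : t < 1 := (div_lt_one hz2pos).2 hlt
      have htz : t * z2 = z1 := div_mul_cancel₀ z1 hz2pos.ne'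
      have hconv : ∀ j ∈ Finset.univ (α := Fin (r+1)),
          p j * Real.exp (-(s j * τ * z1))
          ≤ p j * (t * Real.exp (-(s j * τ * z2)) + (1 - t)) := by
        intro j _
        refine mul_le_mul_of_nonneg_left ?_ (hp j)
        have hcv := convexOn_exp.2 (Set.mem_univ (-(s j * τ * z2))) (Set.mem_univ (0:ℝ))
          htpos.le (by linarith : (0:ℝ) ≤ 1 - t) (by ring)
        simp only [smul_eq_mul, mul_zero, add_zero, Real.exp_zero, mul_one] at hcv
        calc Real.exp (-(s j * τ * z1)) = Real.exp (t * -(s j * τ * z2)) := by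
              rw [← htz]; ring_nf
          _ ≤ t * Real.exp (-(s j * τ * z2)) + (1 - t) := hcv
      have hstrict : F z1 < ∑ j, p j * (t * Real.exp (-(s j * τ * z2)) + (1 - t)) := by
        apply Finset.sum_lt_sum hconv
        refine ⟨j0, Finset.mem_univ _, ?_⟩
        refine mul_lt_mul_of_pos_left ?_ hpj0
        have hne : -(s j0 * τ * z2) ≠ (0:ℝ) := by
          have : 0 < s j0 * τ * z2 := mul_pos (mul_pos hsj0 hτ) hz2pos
          linarith
        have hcv := strictConvexOn_exp.2 (Set.mem_univ (-(s j0 * τ * z2))) (Set.mem_univ (0:ℝ))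
          hne htpos (by linarith : (0:ℝ) < 1 - t) (by ring)
        simp only [smul_eq_mul, mul_zero, add_zero, Real.exp_zero, mul_one] at hcv
        calc Real.exp (-(s j0 * τ * z1)) = Real.exp (t * -(s j0 * τ * z2)) := by
              rw [← htz]; ring_nf
          _ < t * Real.exp (-(s j0 * τ * z2)) + (1 - t) := hcv
      have hrhs : ∑ j, p j * (t * Real.exp (-(s j * τ * z2)) + (1 - t))
          = t * F z2 + (1 - t) := by
        have e1 : ∑ j, p j * (t * Real.exp (-(s j * τ * z2)) + (1 - t))
            = ∑ j, (t * (p j * Real.exp (-(s j * τ * z2))) + (1 - t) * p j) := by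
          apply Finset.sum_congr rfl; intros; ring
        have e2 : (∑ j, p j * Real.exp (-(s j * τ * z2))) = F z2 := rfl
        rw [e1, Finset.sum_add_distrib, ← Finset.mul_sum, ← Finset.mul_sum, e2, hpsum]
        ring
      rw [hrhs] at hstrict
      rw [← he1, ← he2] at hstrict
      nlinarith [hstrict, htz]
    refine ⟨c, ⟨hcmem, hceq⟩, ?_⟩
    rintro y ⟨hymem, hyeq⟩
    rcases lt_trichotomy y c with h | h | h
    · exact (uniq y c hymem hcmem h hyeq hceq).elim
    · exact h
    · exact (uniq c y hcmem hymem h hceq hyeq).elim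
end

section
/- Let p ∈ (0,1), and suppose (z, R_e) with z ∈ (0, 1−p) satisfies R_e ≥ −((1−p)/z)·ln(1 − z/(1−p)). Then there is no δ ∈ (0,1) and τ > 0 with R_e = τ(pδ+1−p) and 1 − z = p·e^{−δτz} + (1−p)·e^{−τz}; i.e., such outcomes are unattainable in the r = 2 model. -/
theorem stmt_19 (p z Re : ℝ) (hp : p ∈ Set.Ioo (0:ℝ) 1) (hz : z ∈ Set.Ioo 0 (1 - p))
    (hRe : -((1 - p) / z) * Real.log (1 - z / (1 - p)) ≤ Re) :
    ¬ ∃ δ ∈ Set.Ioo (0:ℝ) 1, ∃ τ : ℝ, 0 < τ ∧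
        Re = τ * (p * δ + 1 - p) ∧
        1 - z = p * Real.exp (-(δ * τ * z)) + (1 - p) * Real.exp (-(τ * z)) := by
  rintro ⟨δ, ⟨hδ0, hδ1⟩, τ, hτ, hReq, heq⟩
  obtain ⟨hp0, hp1⟩ := hp
  obtain ⟨hz0, hz1⟩ := hz
  have h1p : (0:ℝ) < 1 - p := by linarith
  set A : ℝ := 1 - z / (1 - p) with hAdef
  have hA0 : 0 < A := by
    have : z / (1 - p) < 1 := (div_lt_one h1p).mpr hz1
    simp only [hAdef]; linarith
  have hA1 : A < 1 := by
    have : 0 < z / (1 - p) := div_pos hz0 h1p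
    simp only [hAdef]; linarith
  set Ls : ℝ := -Real.log A with hLs
  have hLsA : Real.exp (-Ls) = A := by
    rw [hLs, neg_neg, Real.exp_log hA0]
  have hL0 : 0 < τ * z := mul_pos hτ hz0
  have hδL0 : 0 < δ * (τ * z) := mul_pos hδ0 hL0
  have hAeq : (1 - p) * A = 1 - p - z := by
    rw [hAdef]; field_simp <;> ring
  have hE : p * (1 - Real.exp (-(δ * (τ * z)))) = (1 - p) * (Real.exp (-(τ * z)) - A) := by
    have hrw : δ * τ * z = δ * (τ * z) := by ring
    rw [hrw] at heq
    linarith [heq, hAeq]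
  have he1 : Real.exp (-(δ * (τ * z))) < 1 := by
    rw [Real.exp_lt_one_iff]; linarith
  have hineq1 : δ * (τ * z) * Real.exp (-(δ * (τ * z))) < 1 - Real.exp (-(δ * (τ * z))) := by
    have h := Real.add_one_lt_exp (ne_of_gt hδL0)
    have hmul : Real.exp (δ * (τ * z)) * Real.exp (-(δ * (τ * z))) = 1 := by
      rw [← Real.exp_add]; simp
    nlinarith [Real.exp_pos (-(δ * (τ * z)))]
  have hee : Real.exp (-(τ * z)) < Real.exp (-(δ * (τ * z))) := by
    apply Real.exp_lt_exp.mpr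
    nlinarith
  have key1 : p * (δ * (τ * z)) * Real.exp (-(τ * z)) < (1 - p) * (Real.exp (-(τ * z)) - A) := by
    calc p * (δ * (τ * z)) * Real.exp (-(τ * z))
        < p * (δ * (τ * z)) * Real.exp (-(δ * (τ * z))) :=
          mul_lt_mul_of_pos_left hee (mul_pos hp0 hδL0)
      _ < p * (1 - Real.exp (-(δ * (τ * z)))) := by nlinarith
      _ = (1 - p) * (Real.exp (-(τ * z)) - A) := hE
  have key2 : Real.exp (-(τ * z)) - A ≤ (Ls - τ * z) * Real.exp (-(τ * z)) := by
    have h := Real.add_one_le_exp (τ * z - Ls)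
    have hmul : Real.exp (τ * z - Ls) * Real.exp (-(τ * z)) = Real.exp (-Ls) := by
      rw [← Real.exp_add]; congr 1; ring
    nlinarith [Real.exp_pos (-(τ * z)), hLsA]
  have key3 : p * (δ * (τ * z)) < (1 - p) * (Ls - τ * z) := by
    have hepos := Real.exp_pos (-(τ * z))
    have h2 : (1 - p) * (Real.exp (-(τ * z)) - A) ≤ (1 - p) * ((Ls - τ * z) * Real.exp (-(τ * z))) :=
      mul_le_mul_of_nonneg_left key2 (le_of_lt h1p)
    have h3 := lt_of_lt_of_le key1 h2
    nlinarith
  have hRez : Re * z = p * (δ * (τ * z)) + (1 - p) * (τ * z) := by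
    rw [hReq]; ring
  have hhyp : (1 - p) * Ls ≤ Re * z := by
    have hrw : -((1 - p) / z) * Real.log A = (1 - p) * Ls / z := by
      rw [hLs]; ring
    rw [hrw] at hRe
    calc (1 - p) * Ls = ((1 - p) * Ls / z) * z := by field_simp
      _ ≤ Re * z := mul_le_mul_of_nonneg_right hRe (le_of_lt hz0)
  linarith
end
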